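/- Let l ≥ 2 and n := 4(l−1). The image of the generalized encoding is a single quantum deletion error-correcting code in the information-theoretic sense: for all unit vectors c, c′ ∈ ℂ^l and all i, j ∈ {1,…,n}, if Tr_i(|Ψ(c)⟩⟨Ψ(c)|) = Tr_j(|Ψ(c′)⟩⟨Ψ(c′)|) then |c⟩⟨c| = |c′⟩⟨c′| (i.e. c′ = e^{iθ} c for some real θ). Consequently there exists a decoding map Dec on density matrices of (ℂ²)^{⊗(n−1)} with Dec(Tr_i(|Ψ(c)⟩⟨Ψ(c)|)) = |c⟩⟨c| for every unit c and every i. -/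
import Mathlib


/- Common setup: (ℂ²)^{⊗n} is modeled as functions {0,1}ⁿ → ℂ, with computational
basis kets, outer products |u⟩⟨v|, and the partial trace over the i-th tensor factor. -/

open Matrix
open scoped ComplexConjugate ComplexOrder

noncomputable section

/-- The computational basis ket `|s⟩` for a bit string `s ∈ {0,1}ⁿ`. -/
def ket {n : ℕ} (s : Fin n → Fin 2) : (Fin n → Fin 2) → ℂ :=
  fun x => if x = s then 1 else 0

/-- The outer product `|u⟩⟨v|`. -/
def outer {ι : Type*} (u v : ι → ℂ) : Matrix ι ι ℂ :=
  Matrix.of fun i j => u i * conj (v j)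

/-- The partial trace over the `i`-th tensor factor (the single deletion error `D_i`);
it satisfies `ptrace i (A₁ ⊗ ⋯ ⊗ Aₙ) = Tr(A_i) • A₁ ⊗ ⋯ ⊗ A_{i-1} ⊗ A_{i+1} ⊗ ⋯ ⊗ Aₙ`. -/
def ptrace {m : ℕ} (i : Fin (m + 1))
    (A : Matrix (Fin (m + 1) → Fin 2) (Fin (m + 1) → Fin 2) ℂ) :
    Matrix (Fin m → Fin 2) (Fin m → Fin 2) ℂ :=
  Matrix.of fun y y' => ∑ b : Fin 2, A (i.insertNth b y) (i.insertNth b y')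

/-- The Hamming weight of a bit string. -/
def wt {n : ℕ} (x : Fin n → Fin 2) : ℕ := ∑ j, (x j : ℕ)

/- Throughout, `l = k + 2` (so that `l ≥ 2`) and `n = 4(l-1) = 4k + 4`. -/

/-- `A_i = { x ∈ {0,1}ⁿ : wt(x) = 2i or wt(x) = n − 2i }` for `0 ≤ i ≤ l − 1`. -/
def Aset (k : ℕ) (i : Fin (k + 2)) : Finset (Fin (4 * k + 3 + 1) → Fin 2) :=
  Finset.univ.filter fun x => wt x = 2 * (i : ℕ) ∨ wt x = (4 * k + 4) - 2 * (i : ℕ)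

/-- The generalized encoding `|Ψ(c)⟩ = Σ_i c_i |A_i|^{−1/2} Σ_{x ∈ A_i} |x⟩`
of a level-`l` state `c ∈ ℂˡ` into `(ℂ²)^{⊗n}` (`l = k+2`, `n = 4(l−1)`). -/
def PsiGen (k : ℕ) (c : Fin (k + 2) → ℂ) : (Fin (4 * k + 3 + 1) → Fin 2) → ℂ :=
  ∑ i : Fin (k + 2),
    (c i * ((Real.sqrt ((Aset k i).card) : ℂ))⁻¹) • ∑ x ∈ Aset k i, ket x

/-- `|Ψ₀⟩ = √2 · Σ_{y even} ⟨y0|Ψ(c)⟩ |y⟩` (here `y0` is `y` with a `0` appended). -/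
def Psi0 (k : ℕ) (c : Fin (k + 2) → ℂ) : (Fin (4 * k + 3) → Fin 2) → ℂ :=
  (Real.sqrt 2 : ℂ) •
    ∑ y ∈ Finset.univ.filter fun y : Fin (4 * k + 3) → Fin 2 => Even (wt y),
      PsiGen k c (Fin.snoc y 0) • ket y

/-- `|Ψ₁⟩ = √2 · Σ_{y odd} ⟨y1|Ψ(c)⟩ |y⟩` (here `y1` is `y` with a `1` appended). -/
def Psi1 (k : ℕ) (c : Fin (k + 2) → ℂ) : (Fin (4 * k + 3) → Fin 2) → ℂ :=
  (Real.sqrt 2 : ℂ) •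
    ∑ y ∈ Finset.univ.filter fun y : Fin (4 * k + 3) → Fin 2 => ¬ Even (wt y),
      PsiGen k c (Fin.snoc y 1) • ket y


lemma wt_indicator (m s : ℕ) (h : s ≤ m) :
    wt (fun t : Fin m => if (t : ℕ) < s then (1 : Fin 2) else 0) = s := by
  unfold wt
  have h1 : ∀ t : Fin m, (((if (t:ℕ) < s then (1 : Fin 2) else 0) : Fin 2) : ℕ)
      = if (t:ℕ) < s then 1 else 0 := by
    intro t; split <;> rfl
  simp only [h1]
  rw [Fin.sum_univ_eq_sum_range (fun t => if t < s then 1 else 0) m, ← Finset.card_filter]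
  have : (Finset.range m).filter (fun t => t < s) = Finset.range s := by
    ext t; simp; omega
  rw [this, Finset.card_range]

lemma mem_Aset_iff {k : ℕ} {i : Fin (k+2)} {x : Fin (4*k+3+1) → Fin 2} :
    x ∈ Aset k i ↔ (wt x = 2*(i:ℕ) ∨ wt x = 4*k+4 - 2*(i:ℕ)) := by
  simp [Aset]

lemma psiGen_apply (k : ℕ) (c : Fin (k+2) → ℂ) (x : Fin (4*k+3+1) → Fin 2) :
    PsiGen k c x = ∑ i : Fin (k+2),
      c i * ((Real.sqrt ((Aset k i).card) : ℂ))⁻¹ * (if x ∈ Aset k i then 1 else 0) := by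
  unfold PsiGen
  rw [Finset.sum_apply]
  refine Finset.sum_congr rfl fun i _ => ?_
  rw [Pi.smul_apply, Finset.sum_apply]
  have : ∑ z ∈ Aset k i, ket z x = if x ∈ Aset k i then 1 else 0 := by
    simp [ket]
  rw [this, smul_eq_mul]

lemma psiGen_eq (k : ℕ) (c : Fin (k+2) → ℂ) (a : Fin (k+2)) (x : Fin (4*k+3+1) → Fin 2)
    (hx : wt x = 2*(a:ℕ)) :
    PsiGen k c x = c a * ((Real.sqrt ((Aset k a).card) : ℂ))⁻¹ := by
  rw [psiGen_apply, Finset.sum_eq_single a]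
  · rw [if_pos (mem_Aset_iff.mpr (Or.inl hx)), mul_one]
  · intro i _ hia
    rw [if_neg, mul_zero]
    intro hmem
    rw [mem_Aset_iff] at hmem
    have hi := i.isLt; have ha := a.isLt
    exact hia (Fin.ext (by rcases hmem with h|h <;> omega))
  · intro h; exact absurd (Finset.mem_univ a) h

lemma psiGen_odd (k : ℕ) (c : Fin (k+2) → ℂ) (x : Fin (4*k+3+1) → Fin 2)
    (hx : Odd (wt x)) : PsiGen k c x = 0 := by
  rw [psiGen_apply]
  refine Finset.sum_eq_zero fun i _ => ?_
  rw [if_neg, mul_zero]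
  intro hmem
  rw [mem_Aset_iff] at hmem
  obtain ⟨m, hm⟩ := hx
  have hi := i.isLt
  rcases hmem with h|h <;> omega

lemma Aset_card_pos (k : ℕ) (a : Fin (k+2)) : 0 < (Aset k a).card := by
  refine Finset.card_pos.mpr ⟨fun t => if (t:ℕ) < 2*(a:ℕ) then 1 else 0, ?_⟩
  exact mem_Aset_iff.mpr (Or.inl (wt_indicator _ _ (by have := a.isLt; omega)))

lemma sqrtA_ne (k : ℕ) (a : Fin (k+2)) : ((Real.sqrt ((Aset k a).card) : ℝ) : ℂ) ≠ 0 := by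
  have h := Aset_card_pos k a
  have : (0:ℝ) < Real.sqrt ((Aset k a).card) :=
    Real.sqrt_pos.mpr (by exact_mod_cast h)
  exact_mod_cast ne_of_gt this

def wvec (k : ℕ) (a : Fin (k+2)) : Fin (4*k+3) → Fin 2 :=
  fun t => if (t:ℕ) < 2*(a:ℕ) then 1 else 0

lemma wt_wvec (k : ℕ) (a : Fin (k+2)) : wt (wvec k a) = 2*(a:ℕ) :=
  wt_indicator _ _ (by have := a.isLt; omega)

lemma wt_insertNth {m : ℕ} (i : Fin (m+1)) (b : Fin 2) (y : Fin m → Fin 2) :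
    wt (i.insertNth b y) = (b:ℕ) + wt y := by
  unfold wt
  rw [Fin.sum_univ_succAbove _ i]
  simp

lemma ptrace_outer_entry (k : ℕ) (c : Fin (k+2) → ℂ) (i : Fin (4*k+3+1))
    (a b : Fin (k+2)) :
    ptrace i (outer (PsiGen k c) (PsiGen k c)) (wvec k a) (wvec k b)
      = c a * conj (c b) *
        (((Real.sqrt ((Aset k a).card) : ℂ)) * ((Real.sqrt ((Aset k b).card) : ℂ)))⁻¹ := by
  have h0a : wt (i.insertNth 0 (wvec k a)) = 2*(a:ℕ) := by
    rw [wt_insertNth, wt_wvec]; simp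
  have h0b : wt (i.insertNth 0 (wvec k b)) = 2*(b:ℕ) := by
    rw [wt_insertNth, wt_wvec]; simp
  have h1a : Odd (wt (i.insertNth 1 (wvec k a))) := by
    rw [wt_insertNth, wt_wvec]; exact ⟨(a:ℕ), by omega⟩
  show ∑ b' : Fin 2, (PsiGen k c (i.insertNth b' (wvec k a)) *
      conj (PsiGen k c (i.insertNth b' (wvec k b)))) = _
  rw [Fin.sum_univ_two, psiGen_odd k c _ h1a, psiGen_eq k c a _ h0a, psiGen_eq k c b _ h0b]
  simp only [_root_.map_mul, map_inv₀, Complex.conj_ofReal, zero_mul, add_zero, mul_inv]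
  ring

/-- for `l = k + 2 ≥ 2` and `n = 4(l−1)`, the image of the generalized
encoding is a single quantum deletion error-correcting code in the
information-theoretic sense: single-deletion outputs of distinct (as states) unit
vectors never coincide, and consequently there exists a decoding map `Dec` on density
matrices of `(ℂ²)^{⊗(n−1)}` recovering `|c⟩⟨c|` from `Tr_i(|Ψ(c)⟩⟨Ψ(c)|)`. -/
theorem generalized_code_corrects_deletions (k : ℕ) :
    (∀ c c' : Fin (k + 2) → ℂ,
        (∑ j, star (c j) * c j) = 1 → (∑ j, star (c' j) * c' j) = 1 →
        ∀ i j : Fin (4 * k + 3 + 1),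
          ptrace i (outer (PsiGen k c) (PsiGen k c))
              = ptrace j (outer (PsiGen k c') (PsiGen k c')) →
            outer c c = outer c' c')
      ∧ ∃ Dec : Matrix (Fin (4 * k + 3) → Fin 2) (Fin (4 * k + 3) → Fin 2) ℂ →
            Matrix (Fin (k + 2)) (Fin (k + 2)) ℂ,
          ∀ c : Fin (k + 2) → ℂ, (∑ j, star (c j) * c j) = 1 →
            ∀ i : Fin (4 * k + 3 + 1),
              Dec (ptrace i (outer (PsiGen k c) (PsiGen k c))) = outer c c := by
  constructor
  · intro c c' _ _ i j H
    ext a b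
    have h := congrFun (congrFun H (wvec k a)) (wvec k b)
    rw [ptrace_outer_entry, ptrace_outer_entry] at h
    have hK : (((Real.sqrt ((Aset k a).card) : ℂ)) *
        ((Real.sqrt ((Aset k b).card) : ℂ)))⁻¹ ≠ 0 :=
      inv_ne_zero (mul_ne_zero (sqrtA_ne k a) (sqrtA_ne k b))
    have h2 := mul_right_cancel₀ hK h
    simpa [outer] using h2
  · refine ⟨fun M => Matrix.of fun a b =>
      ((Real.sqrt ((Aset k a).card) : ℂ)) * ((Real.sqrt ((Aset k b).card) : ℂ)) *
        M (wvec k a) (wvec k b), ?_⟩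
    intro c _ i
    ext a b
    simp only [Matrix.of_apply]
    rw [ptrace_outer_entry]
    have ha := sqrtA_ne k a
    have hb := sqrtA_ne k b
    simp only [outer, Matrix.of_apply]
    field_simp


end
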